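/- arXiv:1601.05283 — 2 statements merged into one kernel-verified Lean document; each statement's English description precedes it below -/
import Mathlib

section
/- (Soundness of Augmentation for preventive marketing) For each social network N = (𝒜, w, λ, θ), each non-negative real p, and all subsets A, B, and C of 𝒜: if N ⊨ A ▷_p B under the preventive semantics, then N ⊨ A∪C ▷_p B∪C under the preventive semantics. -/
open scoped BigOperators Classical

/-- A social network on a (finite) set of agents: influence weights `w` (non-negative),
propensity `lam` and threshold `thr`. -/
structure SocialNetwork (Agent : Type) where
  w : Agent → Agent → ℝ
  w_nonneg : ∀ a b, 0 ≤ w a b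
  lam : Agent → ℝ
  thr : Agent → ℝ

/-- A spending function maps each agent to a non-negative real. -/
def IsSpending {Agent : Type} (s : Agent → ℝ) : Prop := ∀ a, 0 ≤ s a

/-- The diffusion chain `Aⁿ_s`: `A⁰_s = A` and
`Aⁿ⁺¹_s = Aⁿ_s ∪ { b : λ(b)·s(b) + Σ_{a∈Aⁿ_s} w(a,b) ≥ θ(b) }`. -/
noncomputable def diffuse {Agent : Type} [Fintype Agent] (N : SocialNetwork Agent)
    (s : Agent → ℝ) (A : Set Agent) : ℕ → Set Agent
  | 0 => A
  | n + 1 =>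
      diffuse N s A n ∪
        {b : Agent |
          N.lam b * s b +
              ∑ a ∈ Finset.univ.filter (fun a => a ∈ diffuse N s A n), N.w a b ≥
            N.thr b}

/-- `A*_s = ⋃_{n ≥ 0} Aⁿ_s`. -/
noncomputable def diffuseStar {Agent : Type} [Fintype Agent] (N : SocialNetwork Agent)
    (s : Agent → ℝ) (A : Set Agent) : Set Agent :=
  ⋃ n : ℕ, diffuse N s A n

/-- `‖s‖ = Σ_{a ∈ 𝒜} s(a)`. -/
noncomputable def budget {Agent : Type} [Fintype Agent] (s : Agent → ℝ) : ℝ :=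
  ∑ a, s a

/-- The combination `s₁ ⊕_λ s₂` of two spending functions. -/
noncomputable def oplus {Agent : Type} (lam : Agent → ℝ) (s₁ s₂ : Agent → ℝ) :
    Agent → ℝ :=
  fun a => if 0 ≤ lam a then s₁ a + s₂ a else 0

/-- Promotional semantics of the atom `A ▷_p B`: there is a marketing campaign with
budget at most `p` that guarantees that `A` influences `B`. -/
def PromoSat {Agent : Type} [Fintype Agent] (N : SocialNetwork Agent)
    (A : Set Agent) (p : ℝ) (B : Set Agent) : Prop :=
  ∃ s : Agent → ℝ, IsSpending s ∧ budget s ≤ p ∧ B ⊆ diffuseStar N s A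

/-- Preventive semantics of the atom `A ▷_p B`: for every marketing campaign with
budget at most `p`, the set `A` influences the set `B`. -/
def PrevSat {Agent : Type} [Fintype Agent] (N : SocialNetwork Agent)
    (A : Set Agent) (p : ℝ) (B : Set Agent) : Prop :=
  ∀ s : Agent → ℝ, IsSpending s → budget s ≤ p → B ⊆ diffuseStar N s A


lemma diffuse_mono {Agent : Type} [Fintype Agent] (N : SocialNetwork Agent)
    (s : Agent → ℝ) (A A' : Set Agent) (hAA : A ⊆ A') :
    ∀ n, diffuse N s A n ⊆ diffuse N s A' n := by
  intro n
  induction n with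
  | zero => exact hAA
  | succ n ih =>
      intro b hb
      rcases hb with hb | hb
      · exact Or.inl (ih hb)
      · right
        simp only [Set.mem_setOf_eq] at hb ⊢
        refine le_trans (le_trans ?_ hb) ?_
        · rfl
        · apply add_le_add_right
          apply Finset.sum_le_sum_of_subset_of_nonneg
          · intro a ha
            simp only [Finset.mem_filter] at ha ⊢
            exact ⟨ha.1, ih ha.2⟩
          · exact fun a _ _ => N.w_nonneg a b

/-- Soundness of Augmentation for preventive marketing:
if `N ⊨ A ▷_p B` then `N ⊨ A∪C ▷_p B∪C`. -/
theorem prev_augmentation_sound {Agent : Type} [Fintype Agent] (N : SocialNetwork Agent)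
    (p : ℝ) (hp : 0 ≤ p) (A B C : Set Agent) (h : PrevSat N A p B) :
    PrevSat N (A ∪ C) p (B ∪ C) := by
  intro s hs hb x hx
  rcases hx with hx | hx
  · obtain ⟨n, hn⟩ := Set.mem_iUnion.mp (h s hs hb hx)
    exact Set.mem_iUnion.mpr ⟨n, diffuse_mono N s A (A ∪ C) Set.subset_union_left n hn⟩
  · exact Set.mem_iUnion.mpr ⟨0, Or.inr hx⟩
end

section
/- (Soundness of Transitivity for preventive marketing) For each social network N = (𝒜, w, λ, θ), each non-negative real p, and all subsets A, B, and C of 𝒜: if N ⊨ A ▷_p B and N ⊨ B ▷_p C under the preventive semantics, then N ⊨ A ▷_p C under the preventive semantics. -/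
open scoped BigOperators Classical

lemma diffuse_mono_n {Agent : Type} [Fintype Agent] (N : SocialNetwork Agent)
    (s : Agent → ℝ) (A : Set Agent) {m n : ℕ} (h : m ≤ n) :
    diffuse N s A m ⊆ diffuse N s A n := by
  induction n with
  | zero => simp_all
  | succ n ih =>
    rcases Nat.lt_or_ge m (n+1) with h' | h'
    · exact (ih (Nat.lt_succ_iff.mp h')).trans (Set.subset_union_left)
    · have : m = n + 1 := le_antisymm h h'
      subst this; exact subset_rfl

lemma diffuse_subset_star {Agent : Type} [Fintype Agent] (N : SocialNetwork Agent)
    (s : Agent → ℝ) (A B : Set Agent) (hB : B ⊆ diffuseStar N s A) (n : ℕ) :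
    diffuse N s B n ⊆ diffuseStar N s A := by
  induction n with
  | zero => exact hB
  | succ n ih =>
    intro b hb
    rcases hb with hb | hb
    · exact ih hb
    · -- threshold condition for b using sum over diffuse N s B n
      set F := Finset.univ.filter (fun a => a ∈ diffuse N s B n) with hF
      have hex : ∀ a ∈ F, ∃ m, a ∈ diffuse N s A m := by
        intro a ha
        have : a ∈ diffuse N s B n := by simpa [hF] using ha
        exact Set.mem_iUnion.mp (ih this)
      choose! f hf using hex
      set M := F.sup f with hM
      have hsub : F ⊆ Finset.univ.filter (fun a => a ∈ diffuse N s A M) := by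
        intro a ha
        simp only [Finset.mem_filter, Finset.mem_univ, true_and]
        exact diffuse_mono_n N s A (Finset.le_sup ha) (hf a ha)
      have hsum : ∑ a ∈ F, N.w a b ≤
          ∑ a ∈ Finset.univ.filter (fun a => a ∈ diffuse N s A M), N.w a b :=
        Finset.sum_le_sum_of_subset_of_nonneg hsub (fun a _ _ => N.w_nonneg a b)
      have hthr : N.lam b * s b +
          ∑ a ∈ Finset.univ.filter (fun a => a ∈ diffuse N s A M), N.w a b ≥ N.thr b := by
        have hb' : N.lam b * s b + ∑ a ∈ F, N.w a b ≥ N.thr b := hb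
        linarith
      exact Set.mem_iUnion.mpr ⟨M + 1, Or.inr hthr⟩

/-- Soundness of Transitivity for preventive marketing:
if `N ⊨ A ▷_p B` and `N ⊨ B ▷_p C` then `N ⊨ A ▷_p C`. -/
theorem prev_transitivity_sound {Agent : Type} [Fintype Agent] (N : SocialNetwork Agent)
    (p : ℝ) (hp : 0 ≤ p) (A B C : Set Agent)
    (hAB : PrevSat N A p B) (hBC : PrevSat N B p C) :
    PrevSat N A p C := by
  intro s hs hbud c hc
  have hB : B ⊆ diffuseStar N s A := hAB s hs hbud
  have hC : C ⊆ diffuseStar N s B := hBC s hs hbud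
  rcases Set.mem_iUnion.mp (hC hc) with ⟨n, hn⟩
  exact diffuse_subset_star N s A B hB n hn
end
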